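/- arXiv:1201.6548 — 2 statements merged into one kernel-verified Lean document; each statement's English description precedes it below -/
import Mathlib

section
/- If 1/2 < ρ ≤ 1, then H(b | x^(1),…,x^(n)) → 0 as n → ∞, and consequently H(n) − (1 + n·H_b(ρ)) → 0. -/
open Finset Real Filter

/-- `φ t = -(t·log₂ t)`, with the convention `0·log₂ 0 = 0` (Mathlib: `log 0 = 0`). -/
noncomputable def phi (t : ℝ) : ℝ := -(t * Real.logb 2 t)

/-- pmf of a source vector with `k` zeros out of `n`:
`q ρ n k = (1/2)(ρ^k (1-ρ)^{n-k} + (1-ρ)^k ρ^{n-k})`. -/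
noncomputable def q (ρ : ℝ) (n k : ℕ) : ℝ :=
  (1/2) * (ρ^k * (1-ρ)^(n-k) + (1-ρ)^k * ρ^(n-k))

/-- Joint entropy `H(n)` of the `n` correlated source bits (base 2). -/
noncomputable def H (ρ : ℝ) (n : ℕ) : ℝ :=
  ∑ k ∈ Finset.range (n+1), (n.choose k : ℝ) * phi (q ρ n k)

/-- Binary entropy function. -/
noncomputable def Hb (ρ : ℝ) : ℝ := phi ρ + phi (1-ρ)

/-- Joint entropy `H(b, x^(1),…,x^(n))` of the common bit and the `n` observations. -/
noncomputable def Hjoint (ρ : ℝ) (n : ℕ) : ℝ :=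
  ∑ k ∈ Finset.range (n+1), (n.choose k : ℝ) *
    (phi ((1/2) * ρ^k * (1-ρ)^(n-k)) + phi ((1/2) * (1-ρ)^k * ρ^(n-k)))

/-- Conditional entropy `H(b | x^(1),…,x^(n))`, via the chain rule. -/
noncomputable def Hcond (ρ : ℝ) (n : ℕ) : ℝ := Hjoint ρ n - H ρ n

lemma phi_mul (x y : ℝ) : phi (x * y) = y * phi x + x * phi y := by
  rcases eq_or_ne x 0 with hx | hx
  · simp [phi, hx]
  rcases eq_or_ne y 0 with hy | hy
  · simp [phi, hy]
  unfold phi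
  rw [Real.logb, Real.logb, Real.logb, Real.log_mul hx hy]
  field_simp
  ring

lemma phi_half : phi (1/2 : ℝ) = 1/2 := by
  unfold phi
  rw [show (1/2 : ℝ) = 2⁻¹ by norm_num, Real.logb_inv, Real.logb_self_eq_one (by norm_num)]
  norm_num

lemma pascal_sum (f : ℕ → ℝ) (n : ℕ) :
    ∑ k ∈ range (n+2), ((n+1).choose k : ℝ) * f k =
      ∑ k ∈ range (n+1), (n.choose k : ℝ) * f k +
      ∑ k ∈ range (n+1), (n.choose k : ℝ) * f (k+1) := by
  rw [Finset.sum_range_succ' (fun k => ((n+1).choose k : ℝ) * f k) (n+1)]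
  have h1 : ∀ k, (((n+1).choose (k+1) : ℕ) : ℝ) = (n.choose k : ℝ) + (n.choose (k+1) : ℝ) := by
    intro k; rw [Nat.choose_succ_succ]; push_cast; ring
  simp only [h1, add_mul]
  rw [Finset.sum_add_distrib]
  have h2 : ∑ k ∈ range (n+1), (n.choose (k+1) : ℝ) * f (k+1)
      = ∑ k ∈ range (n+1), (n.choose k : ℝ) * f k - (n.choose 0 : ℝ) * f 0 := by
    rw [Finset.sum_range_succ' (fun k => (n.choose k : ℝ) * f k) n]
    have : (n.choose (n+1) : ℝ) * f (n+1) = 0 := by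
      rw [Nat.choose_succ_self]; simp
    rw [Finset.sum_range_succ]
    rw [this]
    ring
  rw [h2]
  simp [Nat.choose_zero_right]
  ring

lemma sum_binom (c σ : ℝ) (n : ℕ) :
    ∑ k ∈ range (n+1), (n.choose k : ℝ) * (c * σ^k * (1-σ)^(n-k)) = c := by
  have h := add_pow σ (1-σ) n
  simp only [add_sub_cancel, one_pow] at h
  calc ∑ k ∈ range (n+1), (n.choose k : ℝ) * (c * σ^k * (1-σ)^(n-k))
      = c * ∑ k ∈ range (n+1), σ^k * (1-σ)^(n-k) * (n.choose k : ℝ) := by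
        rw [Finset.mul_sum]; apply Finset.sum_congr rfl; intro k _; ring
    _ = c := by rw [← h]; ring

lemma gsum (c σ : ℝ) (n : ℕ) :
    ∑ k ∈ range (n+1), (n.choose k : ℝ) * phi (c * σ^k * (1-σ)^(n-k)) =
      phi c + n * c * (phi σ + phi (1-σ)) := by
  induction n with
  | zero => simp
  | succ n ih =>
    have key := pascal_sum (fun k => phi (c * σ^k * (1-σ)^(n+1-k))) n
    rw [key]
    have e1 : ∀ k ∈ range (n+1), (n.choose k : ℝ) * phi (c * σ^k * (1-σ)^(n+1-k))
        = (n.choose k : ℝ) * ((1-σ) * phi (c * σ^k * (1-σ)^(n-k)) + (c * σ^k * (1-σ)^(n-k)) * phi (1-σ)) := by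
      intro k hk
      have hk' : k ≤ n := Nat.lt_succ_iff.mp (Finset.mem_range.mp hk)
      have : n + 1 - k = (n - k) + 1 := by omega
      rw [this, pow_succ, ← mul_assoc, phi_mul]
    have e2 : ∀ k ∈ range (n+1), (n.choose k : ℝ) * phi (c * σ^(k+1) * (1-σ)^(n+1-(k+1)))
        = (n.choose k : ℝ) * (σ * phi (c * σ^k * (1-σ)^(n-k)) + (c * σ^k * (1-σ)^(n-k)) * phi σ) := by
      intro k hk
      have : n + 1 - (k+1) = n - k := by omega
      rw [this, pow_succ, show c * (σ^k * σ) * (1-σ)^(n-k) = (c * σ^k * (1-σ)^(n-k)) * σ by ring, phi_mul]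
    rw [Finset.sum_congr rfl e1, Finset.sum_congr rfl e2]
    have A : ∀ (a b : ℝ), ∑ k ∈ range (n+1), (n.choose k : ℝ) *
          (a * phi (c * σ^k * (1-σ)^(n-k)) + (c * σ^k * (1-σ)^(n-k)) * b)
        = a * (phi c + n * c * (phi σ + phi (1-σ))) + b * c := by
      intro a b
      have h : ∑ k ∈ range (n+1), (n.choose k : ℝ) *
            (a * phi (c * σ^k * (1-σ)^(n-k)) + (c * σ^k * (1-σ)^(n-k)) * b)
          = a * ∑ k ∈ range (n+1), (n.choose k : ℝ) * phi (c * σ^k * (1-σ)^(n-k))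
            + b * ∑ k ∈ range (n+1), (n.choose k : ℝ) * (c * σ^k * (1-σ)^(n-k)) := by
        rw [Finset.mul_sum, Finset.mul_sum, ← Finset.sum_add_distrib]
        exact Finset.sum_congr rfl (fun k _ => by ring)
      rw [h, ih, sum_binom]
    rw [A (1-σ) (phi (1-σ)), A σ (phi σ)]
    push_cast
    ring

lemma Hjoint_eq (ρ : ℝ) (n : ℕ) : Hjoint ρ n = 1 + n * Hb ρ := by
  unfold Hjoint
  have split : ∑ k ∈ Finset.range (n+1), (n.choose k : ℝ) *
      (phi ((1/2) * ρ^k * (1-ρ)^(n-k)) + phi ((1/2) * (1-ρ)^k * ρ^(n-k)))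
      = ∑ k ∈ Finset.range (n+1), (n.choose k : ℝ) * phi ((1/2) * ρ^k * (1-ρ)^(n-k))
        + ∑ k ∈ Finset.range (n+1), (n.choose k : ℝ) * phi ((1/2) * (1-ρ)^k * (1-(1-ρ))^(n-k)) := by
    rw [← Finset.sum_add_distrib]
    apply Finset.sum_congr rfl
    intro k _
    rw [show (1 : ℝ) - (1-ρ) = ρ by ring]
    ring
  rw [split, gsum (1/2) ρ n, gsum (1/2) (1-ρ) n, phi_half,
    show (1 : ℝ) - (1-ρ) = ρ by ring]
  unfold Hb
  ring

lemma phi_diff_nonneg {a b : ℝ} (ha : 0 ≤ a) (hb : 0 ≤ b) :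
    0 ≤ phi a + phi b - phi (a + b) := by
  rcases eq_or_lt_of_le ha with h | ha'
  · simp [phi, ← h]
  rcases eq_or_lt_of_le hb with h | hb'
  · simp [phi, ← h]
  have hab : 0 < a + b := by linarith
  have hL : (0:ℝ) < Real.log 2 := Real.log_pos (by norm_num)
  unfold phi Real.logb
  rw [div_eq_mul_inv, div_eq_mul_inv, div_eq_mul_inv]
  have h1 : Real.log a ≤ Real.log (a+b) := Real.log_le_log ha' (by linarith)
  have h2 : Real.log b ≤ Real.log (a+b) := Real.log_le_log hb' (by linarith)
  have hinv : (0:ℝ) < (Real.log 2)⁻¹ := by positivity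
  nlinarith [mul_le_mul_of_nonneg_left h1 ha, mul_le_mul_of_nonneg_left h2 hb]

lemma log_ratio_bound {a b : ℝ} (ha : 0 < a) (hb : 0 < b) :
    a * (Real.log (a+b) - Real.log a) ≤ 2 * Real.sqrt (a*b) := by
  have hab : 0 < a + b := by linarith
  have h1 : Real.log (a+b) - Real.log a = Real.log ((a+b)/a) := (Real.log_div hab.ne' ha.ne').symm
  have hd : 0 < (a+b)/a := by positivity
  have h2 : Real.log ((a+b)/a) = 2 * Real.log (Real.sqrt ((a+b)/a)) := by
    rw [Real.log_sqrt hd.le]; ring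
  have h3 : Real.log (Real.sqrt ((a+b)/a)) ≤ Real.sqrt ((a+b)/a) - 1 :=
    Real.log_le_sub_one_of_pos (Real.sqrt_pos.mpr hd)
  have h4 : a * Real.sqrt ((a+b)/a) = Real.sqrt (a*(a+b)) := by
    rw [show a * (a+b) = a^2 * ((a+b)/a) by field_simp,
      Real.sqrt_mul (by positivity), Real.sqrt_sq ha.le]
  have h5 : Real.sqrt (a*(a+b)) ≤ a + Real.sqrt (a*b) := by
    rw [show a + Real.sqrt (a*b) = Real.sqrt ((a + Real.sqrt (a*b))^2) by
      rw [Real.sqrt_sq (by positivity)]]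
    apply Real.sqrt_le_sqrt
    have : Real.sqrt (a*b)^2 = a*b := Real.sq_sqrt (by positivity)
    nlinarith [Real.sqrt_nonneg (a*b)]
  calc a * (Real.log (a+b) - Real.log a) = 2 * (a * Real.log (Real.sqrt ((a+b)/a))) := by
        rw [h1, h2]; ring
    _ ≤ 2 * (a * (Real.sqrt ((a+b)/a) - 1)) := by
        have := mul_le_mul_of_nonneg_left h3 ha.le; linarith
    _ = 2 * (Real.sqrt (a*(a+b)) - a) := by rw [← h4]; ring
    _ ≤ 2 * Real.sqrt (a*b) := by nlinarith

lemma phi_diff_le {a b : ℝ} (ha : 0 ≤ a) (hb : 0 ≤ b) :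
    phi a + phi b - phi (a + b) ≤ (4 / Real.log 2) * Real.sqrt (a*b) := by
  have hL : (0:ℝ) < Real.log 2 := Real.log_pos (by norm_num)
  rcases eq_or_lt_of_le ha with h | ha'
  · simp [phi, ← h, Real.sqrt_nonneg]
  rcases eq_or_lt_of_le hb with h | hb'
  · simp [phi, ← h]
  have e : phi a + phi b - phi (a+b)
      = (a * (Real.log (a+b) - Real.log a) + b * (Real.log (a+b) - Real.log b)) / Real.log 2 := by
    unfold phi Real.logb
    field_simp
    ring
  rw [e]
  rw [div_le_iff₀ hL]
  have t1 := log_ratio_bound ha' hb'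
  have t2 := log_ratio_bound hb' ha'
  rw [show b + a = a + b by ring, show b * a = a * b by ring] at t2
  have : (4 / Real.log 2) * Real.sqrt (a*b) * Real.log 2 = 4 * Real.sqrt (a*b) := by
    field_simp
  rw [this]
  linarith

lemma sqrt_pow' (t : ℝ) (ht : 0 ≤ t) (n : ℕ) : Real.sqrt (t^n) = (Real.sqrt t)^n := by
  have h : t^n = ((Real.sqrt t)^n)^2 := by
    rw [← pow_mul, mul_comm, pow_mul, Real.sq_sqrt ht]
  rw [h, Real.sqrt_sq (pow_nonneg (Real.sqrt_nonneg t) n)]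


theorem cond_entropy_vanishes (ρ : ℝ) (hρ1 : 1/2 < ρ) (hρ2 : ρ ≤ 1) :
    Filter.Tendsto (fun n : ℕ => Hcond ρ n) Filter.atTop (nhds 0) ∧
    Filter.Tendsto (fun n : ℕ => H ρ n - (1 + (n : ℝ) * Hb ρ)) Filter.atTop (nhds 0) := by
  have hρ0 : 0 < ρ := by linarith
  have h1ρ : 0 ≤ 1 - ρ := by linarith
  set t := ρ * (1-ρ) with ht
  have ht0 : 0 ≤ t := mul_nonneg hρ0.le h1ρ
  have hL : (0:ℝ) < Real.log 2 := Real.log_pos (by norm_num)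
  have htlt : t < 1/4 := by nlinarith
  have hr1 : 2 * Real.sqrt t < 1 := by
    have h := (Real.sqrt_lt' (x := t) (by norm_num : (0:ℝ) < 1/2)).mpr (by nlinarith)
    linarith
  have hr0 : (0:ℝ) ≤ 2 * Real.sqrt t := by positivity
  have hcond_eq : ∀ n, Hcond ρ n = ∑ k ∈ range (n+1), (n.choose k : ℝ) *
      (phi ((1/2)*ρ^k*(1-ρ)^(n-k)) + phi ((1/2)*(1-ρ)^k*ρ^(n-k))
        - phi ((1/2)*ρ^k*(1-ρ)^(n-k) + (1/2)*(1-ρ)^k*ρ^(n-k))) := by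
    intro n
    unfold Hcond Hjoint H
    rw [← Finset.sum_sub_distrib]
    apply Finset.sum_congr rfl
    intro k _
    rw [show q ρ n k = (1/2)*ρ^k*(1-ρ)^(n-k) + (1/2)*(1-ρ)^k*ρ^(n-k) from by unfold q; ring]
    ring
  have hnonneg : ∀ n, 0 ≤ Hcond ρ n := by
    intro n; rw [hcond_eq]
    apply Finset.sum_nonneg; intro k _
    apply mul_nonneg (by positivity)
    exact phi_diff_nonneg (by positivity) (by positivity)
  have hub : ∀ n, Hcond ρ n ≤ (2/Real.log 2) * (2*Real.sqrt t)^n := by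
    intro n; rw [hcond_eq]
    have step : ∀ k ∈ range (n+1), (n.choose k : ℝ) *
        (phi ((1/2)*ρ^k*(1-ρ)^(n-k)) + phi ((1/2)*(1-ρ)^k*ρ^(n-k))
          - phi ((1/2)*ρ^k*(1-ρ)^(n-k) + (1/2)*(1-ρ)^k*ρ^(n-k)))
        ≤ (n.choose k : ℝ) * ((2/Real.log 2) * (Real.sqrt t)^n) := by
      intro k hk
      have hk' : k ≤ n := Nat.lt_succ_iff.mp (Finset.mem_range.mp hk)
      have hab : ((1/2)*ρ^k*(1-ρ)^(n-k)) * ((1/2)*(1-ρ)^k*ρ^(n-k)) = (1/4) * t^n := by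
        have e0 : ((1/2)*ρ^k*(1-ρ)^(n-k)) * ((1/2)*(1-ρ)^k*ρ^(n-k))
            = (1/4) * ((ρ^k * ρ^(n-k)) * ((1-ρ)^(n-k) * (1-ρ)^k)) := by ring
        have e1 : ρ^k * ρ^(n-k) = ρ^n := by rw [← pow_add]; congr 1; omega
        have e2 : (1-ρ)^(n-k) * (1-ρ)^k = (1-ρ)^n := by rw [← pow_add]; congr 1; omega
        rw [e0, e1, e2, ht, mul_pow]
      have hd := phi_diff_le (a := (1/2)*ρ^k*(1-ρ)^(n-k)) (b := (1/2)*(1-ρ)^k*ρ^(n-k))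
        (by positivity) (by positivity)
      rw [hab] at hd
      have hs : Real.sqrt ((1/4) * t^n) = (1/2) * (Real.sqrt t)^n := by
        rw [Real.sqrt_mul (by norm_num) (t^n), sqrt_pow' t ht0,
          show (1/4 : ℝ) = (1/2)^2 by norm_num, Real.sqrt_sq (by norm_num)]
      rw [hs] at hd
      apply mul_le_mul_of_nonneg_left _ (by positivity : (0:ℝ) ≤ (n.choose k : ℝ))
      calc phi ((1/2)*ρ^k*(1-ρ)^(n-k)) + phi ((1/2)*(1-ρ)^k*ρ^(n-k))
            - phi ((1/2)*ρ^k*(1-ρ)^(n-k) + (1/2)*(1-ρ)^k*ρ^(n-k))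
          ≤ 4 / Real.log 2 * ((1/2) * (Real.sqrt t)^n) := hd
        _ = (2/Real.log 2) * (Real.sqrt t)^n := by ring
    calc ∑ k ∈ range (n+1), (n.choose k : ℝ) *
        (phi ((1/2)*ρ^k*(1-ρ)^(n-k)) + phi ((1/2)*(1-ρ)^k*ρ^(n-k))
          - phi ((1/2)*ρ^k*(1-ρ)^(n-k) + (1/2)*(1-ρ)^k*ρ^(n-k)))
        ≤ ∑ k ∈ range (n+1), (n.choose k : ℝ) * ((2/Real.log 2) * (Real.sqrt t)^n) :=
          Finset.sum_le_sum step
      _ = (∑ k ∈ range (n+1), (n.choose k : ℝ)) * ((2/Real.log 2) * (Real.sqrt t)^n) := by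
          rw [Finset.sum_mul]
      _ = (2^n : ℝ) * ((2/Real.log 2) * (Real.sqrt t)^n) := by
          norm_cast
          rw [Nat.sum_range_choose]
      _ = (2/Real.log 2) * (2*Real.sqrt t)^n := by rw [mul_pow]; ring
  have hg : Filter.Tendsto (fun n : ℕ => (2/Real.log 2) * (2*Real.sqrt t)^n)
      Filter.atTop (nhds 0) := by
    have h := tendsto_pow_atTop_nhds_zero_of_lt_one hr0 hr1
    simpa using h.const_mul (2/Real.log 2)
  have first : Filter.Tendsto (fun n : ℕ => Hcond ρ n) Filter.atTop (nhds 0) :=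
    squeeze_zero hnonneg hub hg
  refine ⟨first, ?_⟩
  have heq : (fun n : ℕ => H ρ n - (1 + (n : ℝ) * Hb ρ)) = fun n : ℕ => -(Hcond ρ n) := by
    funext n
    unfold Hcond
    rw [Hjoint_eq]
    ring
  rw [heq]
  simpa using first.neg
end

section
/- Unbalanced-regime reduction: fix n ≥ 2 and set λ_n = λ_unb(n) = r·[H(n) − H(n−1)]. If (λ₁,…,λ_{n−1}, λ_unb(n)) belongs to the n-source feasible region, then (λ₁,…,λ_{n−1}) belongs to the (n−1)-source feasible region; i.e., for every q ∈ {1,…,n−1} and subset {k₁,…,k_q} ⊆ {1,…,n−1}, Σ_m λ_{k_m} ≥ r·[H(n−1) − H(n−1−q)]. -/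
open Finset Real Filter

/-- The `n`-source feasible region at rate `r`: every nonempty subset of links must carry
at least `r·[H(n) − H(n − |S|)]` total capacity. -/
def Feasible (ρ r : ℝ) (n : ℕ) (lam : Fin n → ℝ) : Prop :=
  ∀ S : Finset (Fin n), S.Nonempty →
    r * (H ρ n - H ρ (n - S.card)) ≤ ∑ i ∈ S, lam i

theorem unbalanced_regime_reduction (ρ r : ℝ) (n : ℕ) (hn : 2 ≤ n)
    (hρ1 : 1/2 ≤ ρ) (hρ2 : ρ ≤ 1) (hr : 0 < r) (lam : Fin n → ℝ)
    (hlast : lam ⟨n-1, by omega⟩ = r * (H ρ n - H ρ (n-1)))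
    (hfeas : Feasible ρ r n lam) :
    ∀ S : Finset (Fin n), S.Nonempty → (⟨n-1, by omega⟩ : Fin n) ∉ S →
      r * (H ρ (n-1) - H ρ (n-1 - S.card)) ≤ ∑ i ∈ S, lam i := by
  intro S hS hnot
  have h := hfeas (insert ⟨n-1, by omega⟩ S) (Finset.insert_nonempty _ _)
  rw [Finset.card_insert_of_notMem hnot, Finset.sum_insert hnot, hlast] at h
  have hc : n - (S.card + 1) = n - 1 - S.card := by omega
  rw [hc] at h
  linarith
end
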